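/- Assume μ₂ ≥ μ₁ and h₁/μ₁ ≤ h₂/μ₂. Fix k, ℓ with k + ℓ = C₁, k ≥ 1 and ℓ < C₂. Then: (1) D(i,k,ℓ) − D(i+1,k,ℓ) ≤ 0 for all i ≥ 0, i.e. i ↦ D(i,k,ℓ) is non-decreasing; (2) if moreover μ₂ > μ₁, there exists a natural number N such that for all i ≥ 0, D(i,k,ℓ) ≤ 0 if and only if i < N, and moreover D(i,k,ℓ) > 0 for all sufficiently large i. -/

import Mathlib

/-- Overall service rate `d(k,ℓ) = k·μ₁ + min(ℓ,C₂)·μ₂`. -/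
noncomputable def dRate (C₂ : ℕ) (μ₁ μ₂ : ℝ) (k ℓ : ℕ) : ℝ :=
  (k : ℝ) * μ₁ + ((min ℓ C₂ : ℕ) : ℝ) * μ₂

/-- Membership of `(i,k,ℓ)` in the state space `X`. -/
def memX (C₁ : ℕ) (i k ℓ : ℕ) : Prop :=
  (i = 0 ∧ k + ℓ < C₁) ∨ k + ℓ = C₁

/-- `v` satisfies the optimality (Bellman) equations of the clearing system.
Terms whose coefficient `k·μ₁` or `min(ℓ,C₂)·μ₂` vanishes contribute `0`,
matching the convention that such summands are omitted. -/
def IsValue (C₁ C₂ : ℕ) (μ₁ μ₂ h₀ h₁ h₂ : ℝ) (v : ℕ → ℕ → ℕ → ℝ) : Prop :=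
  v 0 0 0 = 0 ∧
  (∀ k ℓ : ℕ, k + ℓ ≤ C₁ → ¬(k = 0 ∧ ℓ = 0) →
    v 0 k ℓ = ((k : ℝ) * h₁ + (ℓ : ℝ) * h₂) / dRate C₂ μ₁ μ₂ k ℓ
      + ((k : ℝ) * μ₁ / dRate C₂ μ₁ μ₂ k ℓ) * v 0 (k - 1) ℓ
      + (((min ℓ C₂ : ℕ) : ℝ) * μ₂ / dRate C₂ μ₁ μ₂ k ℓ) * v 0 k (ℓ - 1)) ∧
  (∀ i k ℓ : ℕ, k + ℓ = C₁ →
    v (i + 1) k ℓ =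
      (((i : ℝ) + 1) * h₀ + (k : ℝ) * h₁ + (ℓ : ℝ) * h₂) / dRate C₂ μ₁ μ₂ k ℓ
      + ((k : ℝ) * μ₁ / dRate C₂ μ₁ μ₂ k ℓ) *
          min (v i k ℓ) (v i (k - 1) (ℓ + 1))
      + (((min ℓ C₂ : ℕ) : ℝ) * μ₂ / dRate C₂ μ₁ μ₂ k ℓ) *
          min (v i (k + 1) (ℓ - 1)) (v i k ℓ))

/-- The difference `D(i,k,ℓ) = v(i,k,ℓ) − v(i,k−1,ℓ+1)`. -/
noncomputable def Dv (v : ℕ → ℕ → ℕ → ℝ) (i k ℓ : ℕ) : ℝ :=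
  v i k ℓ - v i (k - 1) (ℓ + 1)

/-!
On the face `k + ℓ = C₁` write `w(i,k) = v(i,k,C₁-k)`, `D(i,k) = w(i,k) - w(i,k-1)` and
`Δ(i,k) = w(i+1,k) - w(i,k)`. At `i = 0` the value is explicit, `v(0,k,ℓ) = k·h₁/μ₁ + g(ℓ)`, so
`h₁/μ₁ ≤ h₂/μ₂` gives `D(0,k) ≤ 0` and `Δ(0,k) = h₀/d(k) + h₁/μ₁`. By induction on `i`,
`D(i,k) ≤ 0` while `ℓ ≥ C₂`, and the excess `Δ(i,k) - h₀/d(k)` is non-decreasing in `k` while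
`ℓ < C₂`. For the latter, subtracting consecutive optimality equations gives
`d(k)·Δ(i+1,k) = h₀ + kμ₁·X(k) + min(ℓ,C₂)μ₂·X(k+1)`, where `X` are the increments of the minima;
`X(k)` lies between `Δ(i,k-1)` and `Δ(i,k)`, which yields
`Δ(i+1,k-1) - h₀/d(k-1) ≤ X(k) ≤ Δ(i+1,k) - h₀/d(k)`.
As `D(i+1,k) - D(i,k) = Δ(i,k) - Δ(i,k-1)`, each step raises `D(·,k)` by at least
`h₀/d(k) - h₀/d(k-1) ≥ 0`, which is positive when `μ₁ < μ₂` since `d(k-1) = d(k) + μ₂ - μ₁`.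
-/

theorem min_sub_min_mem_Icc {α : Type*} [AddCommGroup α] [LinearOrder α] [IsOrderedAddMonoid α]
    (a b c d : α) :
    min a b - min c d ∈ Set.Icc (min (a - c) (b - d)) (max (a - c) (b - d)) := by
  constructor
  · rcases le_total a b with h | h
    · rw [min_eq_left h]; exact (min_le_left _ _).trans (sub_le_sub_left (min_le_left c d) a)
    · rw [min_eq_right h]; exact (min_le_right _ _).trans (sub_le_sub_left (min_le_right c d) b)
  · rcases le_total c d with h | h
    · rw [min_eq_left h]; exact (sub_le_sub_right (min_le_left a b) c).trans (le_max_left _ _)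
    · rw [min_eq_right h]; exact (sub_le_sub_right (min_le_right a b) d).trans (le_max_right _ _)

theorem le_sub_div_of_mul_eq_add {a b t x y h : ℝ} (hab : 0 < a + b) (hxy : b * x ≤ b * y)
    (ht : (a + b) * t = h + a * x + b * y) : x ≤ t - h / (a + b) := by
  rw [le_sub_iff_add_le, ← le_sub_iff_add_le', div_le_iff₀ hab]
  linarith

theorem sub_div_le_of_mul_eq_add {a b t x y h : ℝ} (hab : 0 < a + b) (hxy : a * x ≤ a * y)
    (ht : (a + b) * t = h + a * x + b * y) : t - h / (a + b) ≤ y := by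
  rw [sub_le_iff_le_add, ← sub_le_iff_le_add', le_div_iff₀ hab]
  linarith

theorem exists_nonpos_iff_lt_of_add_le_succ {a : ℕ → ℝ} {c : ℝ} (hc : 0 < c)
    (ha : ∀ i, a i + c ≤ a (i + 1)) :
    ∃ N : ℕ, (∀ i, a i ≤ 0 ↔ i < N) ∧ ∃ I : ℕ, ∀ i, I ≤ i → 0 < a i := by
  have hmono : Monotone a := monotone_nat_of_le_succ fun i => by linarith [ha i]
  have hlin : ∀ i : ℕ, a 0 + i * c ≤ a i := by
    intro i
    induction i with
    | zero => simp
    | succ i ih => push_cast; linarith [ha i]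
  have hpos : ∃ i, 0 < a i := by
    obtain ⟨n, hn⟩ := exists_nat_gt (-a 0 / c)
    refine ⟨n, ?_⟩
    linarith [hlin n, (div_lt_iff₀ hc).1 hn]
  classical
  have hN : ∀ i, a i ≤ 0 ↔ i < Nat.find hpos := fun i =>
    ⟨fun hi => lt_of_not_ge fun hNi => (Nat.find_spec hpos).not_ge ((hmono hNi).trans hi),
      fun hi => not_lt.1 (Nat.find_min hpos hi)⟩
  exact ⟨Nat.find hpos, hN, Nat.find hpos, fun i hi => lt_of_not_ge fun h => ((hN i).1 h).not_ge hi⟩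

section

variable {C₁ C₂ : ℕ} {μ₁ μ₂ h₀ h₁ h₂ : ℝ} {v : ℕ → ℕ → ℕ → ℝ} {i k ℓ : ℕ}

noncomputable def bdryVal (C₁ : ℕ) (v : ℕ → ℕ → ℕ → ℝ) (i k : ℕ) : ℝ := v i k (C₁ - k)

noncomputable def bdryDiff (C₁ : ℕ) (v : ℕ → ℕ → ℕ → ℝ) (i k : ℕ) : ℝ :=
  bdryVal C₁ v i k - bdryVal C₁ v i (k - 1)

noncomputable def bdryIncr (C₁ : ℕ) (v : ℕ → ℕ → ℕ → ℝ) (i k : ℕ) : ℝ :=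
  bdryVal C₁ v (i + 1) k - bdryVal C₁ v i k

noncomputable def bdryExcess (C₁ C₂ : ℕ) (μ₁ μ₂ h₀ : ℝ) (v : ℕ → ℕ → ℕ → ℝ) (i k : ℕ) : ℝ :=
  bdryIncr C₁ v i k - h₀ / dRate C₂ μ₁ μ₂ k (C₁ - k)

noncomputable def bdryMin (C₁ : ℕ) (v : ℕ → ℕ → ℕ → ℝ) (i k : ℕ) : ℝ :=
  min (bdryVal C₁ v i k) (bdryVal C₁ v i (k - 1))

noncomputable def bdryCost (C₁ : ℕ) (h₀ h₁ h₂ : ℝ) (i k : ℕ) : ℝ :=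
  ((i : ℝ) + 1) * h₀ + (k : ℝ) * h₁ + ((C₁ - k : ℕ) : ℝ) * h₂

/-- The holding cost of serving out `ℓ` class-2 jobs alone, so that
`v(0,k,ℓ) = k·h₁/μ₁ + clearCost₂ ℓ`. -/
noncomputable def clearCost₂ (C₂ : ℕ) (μ₂ h₂ : ℝ) (ℓ : ℕ) : ℝ :=
  ∑ t ∈ Finset.range ℓ, ((t : ℝ) + 1) * h₂ / (((min (t + 1) C₂ : ℕ) : ℝ) * μ₂)

@[simp] theorem bdryDiff_zero_right : bdryDiff C₁ v i 0 = 0 := sub_self _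

theorem bdryMin_succ_sub_bdryMin_mem_Icc (C₁ : ℕ) (v : ℕ → ℕ → ℕ → ℝ) (i k : ℕ) :
    bdryMin C₁ v (i + 1) k - bdryMin C₁ v i k ∈
      Set.Icc (min (bdryIncr C₁ v i k) (bdryIncr C₁ v i (k - 1)))
        (max (bdryIncr C₁ v i k) (bdryIncr C₁ v i (k - 1))) :=
  min_sub_min_mem_Icc _ _ _ _

theorem dRate_pos (hC₂ : 1 ≤ C₂) (hμ₁ : 0 < μ₁) (hμ₂ : 0 < μ₂) (h : k ≠ 0 ∨ ℓ ≠ 0) :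
    0 < dRate C₂ μ₁ μ₂ k ℓ := by
  unfold dRate
  rcases h with h | h
  · have : (0 : ℝ) < k := by positivity
    exact add_pos_of_pos_of_nonneg (by positivity) (by positivity)
  · have : (0 : ℝ) < (min ℓ C₂ : ℕ) := by exact_mod_cast (by omega : 0 < min ℓ C₂)
    exact add_pos_of_nonneg_of_pos (by positivity) (by positivity)

theorem dRate_pred_eq (hk : C₁ - C₂ < k) (hkC : k ≤ C₁) :
    dRate C₂ μ₁ μ₂ (k - 1) (C₁ - (k - 1)) = dRate C₂ μ₁ μ₂ k (C₁ - k) + (μ₂ - μ₁) := by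
  obtain ⟨j, rfl⟩ : ∃ j, k = j + 1 := ⟨k - 1, by omega⟩
  unfold dRate
  rw [min_eq_left (by omega : C₁ - (j + 1 - 1) ≤ C₂), min_eq_left (by omega : C₁ - (j + 1) ≤ C₂),
    show C₁ - (j + 1 - 1) = C₁ - (j + 1) + 1 by omega]
  push_cast
  ring

theorem clearCost₂_succ_sub (ℓ : ℕ) :
    clearCost₂ C₂ μ₂ h₂ (ℓ + 1) - clearCost₂ C₂ μ₂ h₂ ℓ
      = ((ℓ : ℝ) + 1) * h₂ / (((min (ℓ + 1) C₂ : ℕ) : ℝ) * μ₂) := by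
  simp [clearCost₂, Finset.sum_range_succ]

theorem min_mul_clearCost₂_sub_pred (hC₂ : 1 ≤ C₂) (hμ₂ : μ₂ ≠ 0) (ℓ : ℕ) :
    ((min ℓ C₂ : ℕ) : ℝ) * μ₂ * (clearCost₂ C₂ μ₂ h₂ ℓ - clearCost₂ C₂ μ₂ h₂ (ℓ - 1))
      = ℓ * h₂ := by
  rcases ℓ with _ | ℓ
  · simp
  · have : ((min (ℓ + 1) C₂ : ℕ) : ℝ) ≠ 0 := by exact_mod_cast (by omega : min (ℓ + 1) C₂ ≠ 0)
    rw [Nat.add_sub_cancel, clearCost₂_succ_sub]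
    field_simp
    push_cast
    ring

theorem div_le_clearCost₂_succ_sub (hC₂ : 1 ≤ C₂) (hμ₂ : 0 < μ₂) (hh₂ : 0 ≤ h₂) (ℓ : ℕ) :
    h₂ / μ₂ ≤ clearCost₂ C₂ μ₂ h₂ (ℓ + 1) - clearCost₂ C₂ μ₂ h₂ ℓ := by
  have hm : (0 : ℝ) < (min (ℓ + 1) C₂ : ℕ) := by exact_mod_cast (by omega : 0 < min (ℓ + 1) C₂)
  have hm' : ((min (ℓ + 1) C₂ : ℕ) : ℝ) ≤ ℓ + 1 := by exact_mod_cast min_le_left _ _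
  rw [clearCost₂_succ_sub, div_le_div_iff₀ hμ₂ (by positivity)]
  nlinarith [mul_le_mul_of_nonneg_left hm' (mul_nonneg hh₂ hμ₂.le)]

theorem bdryIncr_pred_le_of_bdryExcess_pred_le (hC₂ : 1 ≤ C₂) (hμ₁ : 0 < μ₁) (hμ₂ : 0 < μ₂)
    (hh₀ : 0 ≤ h₀) (hμ : μ₁ ≤ μ₂) (hk : C₁ - C₂ < k) (hkC : k ≤ C₁)
    (h : bdryExcess C₁ C₂ μ₁ μ₂ h₀ v i (k - 1) ≤ bdryExcess C₁ C₂ μ₁ μ₂ h₀ v i k) :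
    bdryIncr C₁ v i (k - 1) ≤ bdryIncr C₁ v i k := by
  have hd : h₀ / dRate C₂ μ₁ μ₂ (k - 1) (C₁ - (k - 1)) ≤ h₀ / dRate C₂ μ₁ μ₂ k (C₁ - k) :=
    div_le_div_of_nonneg_left hh₀ (dRate_pos hC₂ hμ₁ hμ₂ (by omega))
      (by rw [dRate_pred_eq hk hkC]; linarith)
  unfold bdryExcess at h
  linarith

theorem IsValue.apply_zero_eq (hv : IsValue C₁ C₂ μ₁ μ₂ h₀ h₁ h₂ v) (hC₂ : 1 ≤ C₂) (hμ₁ : 0 < μ₁)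
    (hμ₂ : 0 < μ₂) (k ℓ : ℕ) (h : k + ℓ ≤ C₁) :
    v 0 k ℓ = k * (h₁ / μ₁) + clearCost₂ C₂ μ₂ h₂ ℓ := by
  rcases Nat.eq_zero_or_pos (k + ℓ) with h0 | hpos
  · obtain ⟨rfl, rfl⟩ : k = 0 ∧ ℓ = 0 := by omega
    simp [hv.1, clearCost₂]
  have hd := dRate_pos hC₂ hμ₁ hμ₂ (k := k) (ℓ := ℓ) (by omega)
  -- A summand whose index `k - 1` or `ℓ - 1` truncates at `0` has a vanishing coefficient.
  have hk : (k : ℝ) * μ₁ * v 0 (k - 1) ℓ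
      = k * μ₁ * (((k - 1 : ℕ) : ℝ) * (h₁ / μ₁) + clearCost₂ C₂ μ₂ h₂ ℓ) := by
    rcases Nat.eq_zero_or_pos k with rfl | hk
    · simp
    · rw [hv.apply_zero_eq hC₂ hμ₁ hμ₂ (k - 1) ℓ (by omega)]
  have hℓ : ((min ℓ C₂ : ℕ) : ℝ) * μ₂ * v 0 k (ℓ - 1)
      = ((min ℓ C₂ : ℕ) : ℝ) * μ₂ * (k * (h₁ / μ₁) + clearCost₂ C₂ μ₂ h₂ (ℓ - 1)) := by
    rcases Nat.eq_zero_or_pos ℓ with rfl | hℓ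
    · simp
    · rw [hv.apply_zero_eq hC₂ hμ₁ hμ₂ k (ℓ - 1) (by omega)]
  have hkk : (k : ℝ) * ((k - 1 : ℕ) : ℝ) = k * (k - 1) := by
    rcases k with _ | k <;> simp
  have hb : dRate C₂ μ₁ μ₂ k ℓ * v 0 k ℓ = k * h₁ + ℓ * h₂ + k * μ₁ * v 0 (k - 1) ℓ
      + ((min ℓ C₂ : ℕ) : ℝ) * μ₂ * v 0 k (ℓ - 1) := by
    rw [hv.2.1 k ℓ h (by omega)]
    field_simp
  have hg := min_mul_clearCost₂_sub_pred (h₂ := h₂) hC₂ hμ₂.ne' ℓ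
  have hr : μ₁ * (h₁ / μ₁) = h₁ := mul_div_cancel₀ _ hμ₁.ne'
  apply mul_left_cancel₀ hd.ne'
  rw [hb, hk, hℓ]
  unfold dRate
  linear_combination (μ₁ * (h₁ / μ₁)) * hkk - hg - k * hr
termination_by k + ℓ

theorem IsValue.dRate_mul_bdryVal_succ (hv : IsValue C₁ C₂ μ₁ μ₂ h₀ h₁ h₂ v) (hC₂ : 1 ≤ C₂)
    (hμ₁ : 0 < μ₁) (hμ₂ : 0 < μ₂) (hC₁ : 0 < C₁) (i : ℕ) (hk : k ≤ C₁) :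
    dRate C₂ μ₁ μ₂ k (C₁ - k) * bdryVal C₁ v (i + 1) k
      = bdryCost C₁ h₀ h₁ h₂ i k + k * μ₁ * bdryMin C₁ v i k
        + ((min (C₁ - k) C₂ : ℕ) : ℝ) * μ₂ * bdryMin C₁ v i (k + 1) := by
  have hd := dRate_pos hC₂ hμ₁ hμ₂ (k := k) (ℓ := C₁ - k) (by omega)
  have hmin : (k : ℝ) * μ₁ * min (v i k (C₁ - k)) (v i (k - 1) (C₁ - k + 1))
      = k * μ₁ * bdryMin C₁ v i k := by
    rcases Nat.eq_zero_or_pos k with rfl | hk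
    · simp
    · rw [bdryMin, bdryVal, bdryVal, show C₁ - (k - 1) = C₁ - k + 1 by omega]
  rw [bdryVal, hv.2.2 i k (C₁ - k) (by omega), Nat.sub_sub, ← hmin]
  field_simp
  rfl

theorem IsValue.dRate_mul_bdryIncr (hv : IsValue C₁ C₂ μ₁ μ₂ h₀ h₁ h₂ v) (hC₂ : 1 ≤ C₂)
    (hμ₁ : 0 < μ₁) (hμ₂ : 0 < μ₂) (hC₁ : 0 < C₁) (i : ℕ) (hk : k ≤ C₁) :
    dRate C₂ μ₁ μ₂ k (C₁ - k) * bdryIncr C₁ v i k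
      = bdryCost C₁ h₀ h₁ h₂ i k - k * μ₁ * max (bdryDiff C₁ v i k) 0
        + ((min (C₁ - k) C₂ : ℕ) : ℝ) * μ₂ * min (bdryDiff C₁ v i (k + 1)) 0 := by
  have hmax :=
    max_sub_sub_right (bdryVal C₁ v i k) (bdryVal C₁ v i (k - 1)) (bdryVal C₁ v i (k - 1))
  have hmin := min_sub_sub_right (bdryVal C₁ v i (k + 1)) (bdryVal C₁ v i k) (bdryVal C₁ v i k)
  rw [sub_self] at hmax hmin
  rw [bdryIncr, mul_sub, hv.dRate_mul_bdryVal_succ hC₂ hμ₁ hμ₂ hC₁ i hk, bdryDiff, bdryDiff, hmax,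
    Nat.add_sub_cancel, hmin, bdryMin, bdryMin, Nat.add_sub_cancel]
  unfold dRate
  linear_combination (k * μ₁) * min_add_max (bdryVal C₁ v i k) (bdryVal C₁ v i (k - 1))

theorem IsValue.dRate_mul_bdryIncr_succ (hv : IsValue C₁ C₂ μ₁ μ₂ h₀ h₁ h₂ v)
    (hC₂ : 1 ≤ C₂) (hμ₁ : 0 < μ₁) (hμ₂ : 0 < μ₂) (hC₁ : 0 < C₁) (i : ℕ) (hk : k ≤ C₁) :
    dRate C₂ μ₁ μ₂ k (C₁ - k) * bdryIncr C₁ v (i + 1) k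
      = h₀ + k * μ₁ * (bdryMin C₁ v (i + 1) k - bdryMin C₁ v i k)
        + ((min (C₁ - k) C₂ : ℕ) : ℝ) * μ₂
          * (bdryMin C₁ v (i + 1) (k + 1) - bdryMin C₁ v i (k + 1)) := by
  have hcost : bdryCost C₁ h₀ h₁ h₂ (i + 1) k - bdryCost C₁ h₀ h₁ h₂ i k = h₀ := by
    simp only [bdryCost]; push_cast; ring
  rw [bdryIncr, mul_sub]
  linear_combination hv.dRate_mul_bdryVal_succ hC₂ hμ₁ hμ₂ hC₁ (i + 1) hk
    - hv.dRate_mul_bdryVal_succ hC₂ hμ₁ hμ₂ hC₁ i hk + hcost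

theorem IsValue.bdryDiff_zero_succ (hv : IsValue C₁ C₂ μ₁ μ₂ h₀ h₁ h₂ v) (hC₂ : 1 ≤ C₂)
    (hμ₁ : 0 < μ₁) (hμ₂ : 0 < μ₂) (hk : k < C₁) :
    bdryDiff C₁ v 0 (k + 1)
      = h₁ / μ₁ - (clearCost₂ C₂ μ₂ h₂ (C₁ - k) - clearCost₂ C₂ μ₂ h₂ (C₁ - k - 1)) := by
  rw [bdryDiff, bdryVal, bdryVal, Nat.add_sub_cancel, hv.apply_zero_eq hC₂ hμ₁ hμ₂ _ _ (by omega),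
    hv.apply_zero_eq hC₂ hμ₁ hμ₂ _ _ (by omega), Nat.sub_sub]
  push_cast
  ring

theorem IsValue.bdryDiff_zero_nonpos (hv : IsValue C₁ C₂ μ₁ μ₂ h₀ h₁ h₂ v) (hC₂ : 1 ≤ C₂)
    (hμ₁ : 0 < μ₁) (hμ₂ : 0 < μ₂) (hh₂ : 0 ≤ h₂) (hcost : h₁ / μ₁ ≤ h₂ / μ₂) (hk : k ≤ C₁) :
    bdryDiff C₁ v 0 k ≤ 0 := by
  rcases k with _ | k
  · simp
  · obtain ⟨ℓ, hℓ⟩ : ∃ ℓ, C₁ - k = ℓ + 1 := ⟨C₁ - k - 1, by omega⟩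
    rw [hv.bdryDiff_zero_succ hC₂ hμ₁ hμ₂ hk, hℓ, Nat.add_sub_cancel]
    linarith [div_le_clearCost₂_succ_sub hC₂ hμ₂ hh₂ ℓ]

theorem IsValue.bdryIncr_zero (hv : IsValue C₁ C₂ μ₁ μ₂ h₀ h₁ h₂ v) (hC₂ : 1 ≤ C₂)
    (hμ₁ : 0 < μ₁) (hμ₂ : 0 < μ₂) (hh₂ : 0 ≤ h₂) (hcost : h₁ / μ₁ ≤ h₂ / μ₂) (hC₁ : 0 < C₁)
    (hk : k ≤ C₁) :
    bdryIncr C₁ v 0 k = h₀ / dRate C₂ μ₁ μ₂ k (C₁ - k) + h₁ / μ₁ := by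
  have hd := dRate_pos hC₂ hμ₁ hμ₂ (k := k) (ℓ := C₁ - k) (by omega)
  have hmax : max (bdryDiff C₁ v 0 k) 0 = 0 :=
    max_eq_right (hv.bdryDiff_zero_nonpos hC₂ hμ₁ hμ₂ hh₂ hcost hk)
  have hmin : ((min (C₁ - k) C₂ : ℕ) : ℝ) * μ₂ * min (bdryDiff C₁ v 0 (k + 1)) 0
      = ((min (C₁ - k) C₂ : ℕ) : ℝ) * μ₂ * (h₁ / μ₁) - ((C₁ - k : ℕ) : ℝ) * h₂ := by
    rcases hk.lt_or_eq with hk | rfl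
    · rw [min_eq_left (hv.bdryDiff_zero_nonpos hC₂ hμ₁ hμ₂ hh₂ hcost hk),
        hv.bdryDiff_zero_succ hC₂ hμ₁ hμ₂ hk]
      linear_combination -min_mul_clearCost₂_sub_pred (h₂ := h₂) hC₂ hμ₂.ne' (C₁ - k)
    · simp
  have hr : μ₁ * (h₁ / μ₁) = h₁ := mul_div_cancel₀ _ hμ₁.ne'
  rw [← sub_eq_iff_eq_add, eq_div_iff hd.ne']
  have key := hv.dRate_mul_bdryIncr hC₂ hμ₁ hμ₂ hC₁ 0 hk
  rw [hmax, hmin] at key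
  unfold dRate bdryCost at *
  rw [Nat.cast_zero] at key
  linear_combination key - k * hr

theorem IsValue.bdryDiff_succ_nonpos (hv : IsValue C₁ C₂ μ₁ μ₂ h₀ h₁ h₂ v) (hC₂ : 1 ≤ C₂)
    (hμ₁ : 0 < μ₁) (hμ₂ : 0 < μ₂) (hh₀ : 0 ≤ h₀) (hh₁ : 0 ≤ h₁) (hh₂ : 0 ≤ h₂) (h₁₂ : h₁ ≤ h₂)
    (hP : ∀ j ≤ C₁ - C₂, bdryDiff C₁ v i j ≤ 0) (hk : k ≤ C₁ - C₂) :
    bdryDiff C₁ v (i + 1) k ≤ 0 := by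
  rcases k with _ | j
  · simp
  have hC₁ : 0 < C₁ := by omega
  have hmj : min (C₁ - j) C₂ = C₂ := by omega
  have hmk : min (C₁ - (j + 1)) C₂ = C₂ := by omega
  set d := dRate C₂ μ₁ μ₂ (j + 1) (C₁ - (j + 1))
  set d' := dRate C₂ μ₁ μ₂ j (C₁ - j)
  have hd' : 0 < d' := dRate_pos hC₂ hμ₁ hμ₂ (by omega)
  have hdd : d' ≤ d := by
    simp only [d, d', dRate, hmj, hmk]; push_cast; linarith
  have hC₂d : C₂ * μ₂ ≤ d' := by
    simp only [d', dRate, hmj]; linarith [mul_nonneg (Nat.cast_nonneg j) hμ₁.le]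
  have hG : bdryCost C₁ h₀ h₁ h₂ i (j + 1) ≤ bdryCost C₁ h₀ h₁ h₂ i j := by
    simp only [bdryCost, show C₁ - j = C₁ - (j + 1) + 1 by omega]; push_cast; linarith
  have hG₀ : 0 ≤ bdryCost C₁ h₀ h₁ h₂ i j := by unfold bdryCost; positivity
  -- With `G = bdryCost` and `k = j + 1`:
  -- `Δ(i,k) ≤ G(i,k)/d(k) ≤ G(i,k-1)/d(k-1) ≤ Δ(i,k-1) - D(i,k)`.
  have hup : bdryIncr C₁ v i (j + 1) ≤ bdryCost C₁ h₀ h₁ h₂ i (j + 1) / d := by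
    have key := hv.dRate_mul_bdryIncr hC₂ hμ₁ hμ₂ hC₁ i (k := j + 1) (by omega)
    rw [max_eq_right (hP _ hk), hmk] at key
    change d * _ = _ at key
    rw [le_div_iff₀ (hd'.trans_le hdd), mul_comm, key]
    nlinarith [mul_nonpos_of_nonneg_of_nonpos (by positivity : (0 : ℝ) ≤ C₂ * μ₂)
      (min_le_right (bdryDiff C₁ v i (j + 1 + 1)) 0)]
  have hlow : bdryCost C₁ h₀ h₁ h₂ i j / d' + bdryDiff C₁ v i (j + 1) ≤ bdryIncr C₁ v i j := by
    have key := hv.dRate_mul_bdryIncr hC₂ hμ₁ hμ₂ hC₁ i (k := j) (by omega)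
    have hmax : (j : ℝ) * μ₁ * max (bdryDiff C₁ v i j) 0 = 0 := by
      rw [max_eq_right (hP _ (by omega)), mul_zero]
    rw [hmax, hmj, min_eq_left (hP _ hk)] at key
    change d' * _ = _ at key
    rw [div_add' _ _ _ hd'.ne', div_le_iff₀ hd', mul_comm (bdryIncr C₁ v i j), key]
    nlinarith [mul_le_mul_of_nonpos_right hC₂d (hP _ hk)]
  have hstep : bdryDiff C₁ v (i + 1) (j + 1)
      = bdryDiff C₁ v i (j + 1) + bdryIncr C₁ v i (j + 1) - bdryIncr C₁ v i j := by
    simp only [bdryDiff, bdryIncr, Nat.add_sub_cancel]; ring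
  rw [hstep]
  linarith [div_le_div₀ hG₀ hG hd' hdd]

theorem IsValue.bdryExcess_pred_le_succ (hv : IsValue C₁ C₂ μ₁ μ₂ h₀ h₁ h₂ v) (hC₂ : 1 ≤ C₂)
    (hμ₁ : 0 < μ₁) (hμ₂ : 0 < μ₂) (hh₀ : 0 ≤ h₀) (hμ : μ₁ ≤ μ₂)
    (hP : ∀ j ≤ C₁ - C₂, bdryDiff C₁ v i j ≤ 0)
    (hP' : ∀ j ≤ C₁ - C₂, bdryDiff C₁ v (i + 1) j ≤ 0)
    (hR : ∀ j, C₁ - C₂ < j → j ≤ C₁ →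
      bdryExcess C₁ C₂ μ₁ μ₂ h₀ v i (j - 1) ≤ bdryExcess C₁ C₂ μ₁ μ₂ h₀ v i j)
    (hk : C₁ - C₂ < k) (hkC : k ≤ C₁) :
    bdryExcess C₁ C₂ μ₁ μ₂ h₀ v (i + 1) (k - 1) ≤ bdryExcess C₁ C₂ μ₁ μ₂ h₀ v (i + 1) k := by
  have hC₁ : 0 < C₁ := by omega
  have hmono : ∀ j, C₁ - C₂ < j → j ≤ C₁ → bdryIncr C₁ v i (j - 1) ≤ bdryIncr C₁ v i j :=
    fun j hj hjC => bdryIncr_pred_le_of_bdryExcess_pred_le hC₂ hμ₁ hμ₂ hh₀ hμ hj hjC (hR j hj hjC)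
  set X : ℕ → ℝ := fun j => bdryMin C₁ v (i + 1) j - bdryMin C₁ v i j
  have hXk : bdryIncr C₁ v i (k - 1) ≤ X k ∧ X k ≤ bdryIncr C₁ v i k := by
    have := bdryMin_succ_sub_bdryMin_mem_Icc C₁ v i k
    rwa [min_eq_right (hmono k hk hkC), max_eq_left (hmono k hk hkC)] at this
  have hXsucc : ((min (C₁ - k) C₂ : ℕ) : ℝ) * μ₂ * X k
      ≤ ((min (C₁ - k) C₂ : ℕ) : ℝ) * μ₂ * X (k + 1) := by
    rcases hkC.lt_or_eq with hlt | rfl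
    · have := (bdryMin_succ_sub_bdryMin_mem_Icc C₁ v i (k + 1)).1
      rw [min_eq_right (hmono (k + 1) (by omega) hlt)] at this
      exact mul_le_mul_of_nonneg_left (hXk.2.trans this) (by positivity)
    · simp
  have hXpred : ((k - 1 : ℕ) : ℝ) * μ₁ * X (k - 1) ≤ ((k - 1 : ℕ) : ℝ) * μ₁ * X k := by
    refine mul_le_mul_of_nonneg_left (le_trans ?_ hXk.1) (by positivity)
    by_cases hk' : C₁ - C₂ < k - 1
    · have := (bdryMin_succ_sub_bdryMin_mem_Icc C₁ v i (k - 1)).2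
      rwa [max_eq_left (hmono (k - 1) hk' (by omega))] at this
    · have hmin : ∀ i', bdryDiff C₁ v i' (k - 1) ≤ 0 →
          bdryMin C₁ v i' (k - 1) = bdryVal C₁ v i' (k - 1) :=
        fun i' h => min_eq_left (sub_nonpos.1 h)
      simp only [X, bdryIncr, hmin i (hP _ (by omega)), hmin (i + 1) (hP' _ (by omega)), le_refl]
  have hincr := hv.dRate_mul_bdryIncr_succ hC₂ hμ₁ hμ₂ hC₁ i (k := k - 1) (by omega)
  rw [Nat.sub_add_cancel (by omega : 1 ≤ k)] at hincr
  have hhi := le_sub_div_of_mul_eq_add (dRate_pos hC₂ hμ₁ hμ₂ (by omega)) hXsucc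
    (hv.dRate_mul_bdryIncr_succ hC₂ hμ₁ hμ₂ hC₁ i hkC)
  have hlo := sub_div_le_of_mul_eq_add (dRate_pos hC₂ hμ₁ hμ₂ (by omega)) hXpred hincr
  exact hlo.trans hhi

theorem IsValue.bdryDiff_nonpos_and_bdryExcess_mono (hv : IsValue C₁ C₂ μ₁ μ₂ h₀ h₁ h₂ v)
    (hC₂ : 1 ≤ C₂) (hμ₁ : 0 < μ₁) (hμ₂ : 0 < μ₂) (hh₀ : 0 ≤ h₀) (hh₁ : 0 ≤ h₁) (hh₂ : 0 ≤ h₂)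
    (hμ : μ₁ ≤ μ₂) (hcost : h₁ / μ₁ ≤ h₂ / μ₂) (i : ℕ) :
    (∀ j ≤ C₁ - C₂, bdryDiff C₁ v i j ≤ 0) ∧
      ∀ j, C₁ - C₂ < j → j ≤ C₁ →
        bdryExcess C₁ C₂ μ₁ μ₂ h₀ v i (j - 1) ≤ bdryExcess C₁ C₂ μ₁ μ₂ h₀ v i j := by
  induction i with
  | zero =>
    refine ⟨fun j hj => hv.bdryDiff_zero_nonpos hC₂ hμ₁ hμ₂ hh₂ hcost (by omega),
      fun j hj hjC => ?_⟩
    simp only [bdryExcess, hv.bdryIncr_zero hC₂ hμ₁ hμ₂ hh₂ hcost (by omega) hjC,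
      hv.bdryIncr_zero hC₂ hμ₁ hμ₂ hh₂ hcost (by omega) (by omega : j - 1 ≤ C₁),
      add_sub_cancel_left, le_refl]
  | succ i ih =>
    have h₁₂ : h₁ ≤ h₂ := by
      calc h₁ = μ₁ * (h₁ / μ₁) := (mul_div_cancel₀ _ hμ₁.ne').symm
        _ ≤ μ₂ * (h₂ / μ₂) := mul_le_mul hμ hcost (div_nonneg hh₁ hμ₁.le) hμ₂.le
        _ = h₂ := mul_div_cancel₀ _ hμ₂.ne'
    have hP := fun j (hj : j ≤ C₁ - C₂) =>
      hv.bdryDiff_succ_nonpos hC₂ hμ₁ hμ₂ hh₀ hh₁ hh₂ h₁₂ ih.1 hj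
    exact ⟨hP, fun j hj hjC => hv.bdryExcess_pred_le_succ hC₂ hμ₁ hμ₂ hh₀ hμ ih.1 hP ih.2 hj hjC⟩

end

theorem stmt5_general
    (C₁ C₂ : ℕ) (hC₂pos : 1 ≤ C₂)
    (μ₁ μ₂ h₀ h₁ h₂ : ℝ)
    (hμ₁ : 0 < μ₁) (hμ₂ : 0 < μ₂)
    (hh₀ : 0 < h₀) (hh₁ : 0 < h₁) (hh₂ : 0 < h₂)
    (v : ℕ → ℕ → ℕ → ℝ) (hv : IsValue C₁ C₂ μ₁ μ₂ h₀ h₁ h₂ v)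
    (hμ : μ₁ ≤ μ₂) (hcost : h₁ / μ₁ ≤ h₂ / μ₂)
    (k ℓ : ℕ) (hkl : k + ℓ = C₁) (hk : 1 ≤ k) (hℓ : ℓ < C₂) :
    (∀ i : ℕ, Dv v i k ℓ - Dv v (i + 1) k ℓ ≤ 0) ∧
    (μ₁ < μ₂ →
      ∃ N : ℕ, (∀ i : ℕ, Dv v i k ℓ ≤ 0 ↔ i < N) ∧
        ∃ I : ℕ, ∀ i : ℕ, I ≤ i → 0 < Dv v i k ℓ) := by
  obtain rfl : ℓ = C₁ - k := by omega
  have hhigh : C₁ - C₂ < k := by omega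
  have hd : 0 < dRate C₂ μ₁ μ₂ k (C₁ - k) := dRate_pos hC₂pos hμ₁ hμ₂ (by omega)
  set c := h₀ / dRate C₂ μ₁ μ₂ k (C₁ - k) - h₀ / dRate C₂ μ₁ μ₂ (k - 1) (C₁ - (k - 1))
  have hDv : ∀ i, Dv v i k (C₁ - k) = bdryDiff C₁ v i k := fun i => by
    rw [Dv, bdryDiff, bdryVal, bdryVal, show C₁ - (k - 1) = C₁ - k + 1 by omega]
  have hstep : ∀ i, Dv v i k (C₁ - k) + c ≤ Dv v (i + 1) k (C₁ - k) := fun i => by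
    have := (hv.bdryDiff_nonpos_and_bdryExcess_mono hC₂pos hμ₁ hμ₂ hh₀.le hh₁.le hh₂.le hμ hcost
      i).2 k hhigh (by omega)
    rw [hDv, hDv]
    simp only [bdryExcess, bdryIncr] at this
    simp only [bdryDiff]
    linarith
  have hdd := dRate_pred_eq (μ₁ := μ₁) (μ₂ := μ₂) hhigh (by omega)
  refine ⟨fun i => ?_, fun hlt => exists_nonpos_iff_lt_of_add_le_succ ?_ hstep⟩
  · have : 0 ≤ c := sub_nonneg.2 (div_le_div_of_nonneg_left hh₀.le hd (by linarith))
    linarith [hstep i]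
  · exact sub_pos.2 (div_lt_div_of_pos_left hh₀ hd (by linarith))

theorem stmt5
    (C₁ C₂ : ℕ) (hC₂pos : 1 ≤ C₂) (hC : C₂ < C₁)
    (μ₁ μ₂ h₀ h₁ h₂ : ℝ)
    (hμ₁ : 0 < μ₁) (hμ₂ : 0 < μ₂)
    (hh₀ : 0 < h₀) (hh₁ : 0 < h₁) (hh₂ : 0 < h₂)
    (v : ℕ → ℕ → ℕ → ℝ) (hv : IsValue C₁ C₂ μ₁ μ₂ h₀ h₁ h₂ v)
    (hμ : μ₁ ≤ μ₂) (hcost : h₁ / μ₁ ≤ h₂ / μ₂)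
    (k ℓ : ℕ) (hkl : k + ℓ = C₁) (hk : 1 ≤ k) (hℓ : ℓ < C₂) :
    (∀ i : ℕ, Dv v i k ℓ - Dv v (i + 1) k ℓ ≤ 0) ∧
    (μ₁ < μ₂ →
      ∃ N : ℕ, (∀ i : ℕ, Dv v i k ℓ ≤ 0 ↔ i < N) ∧
        ∃ I : ℕ, ∀ i : ℕ, I ≤ i → 0 < Dv v i k ℓ) :=
  stmt5_general C₁ C₂ hC₂pos μ₁ μ₂ h₀ h₁ h₂ hμ₁ hμ₂ hh₀ hh₁ hh₂ v hv hμ hcost k ℓ hkl hk hℓ
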